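/- Let ξ ∈ ℝ³ with |(ξ₁,ξ₂)| > 0, η₁ = (1/|ξ'|)(ξ₂,-ξ₁,0), η₂ = η₁ × (ξ/|ξ|), k > 0, and τ > max(k, |ξ|/2). Define ζ₁ = ξ/2 + √(τ² - |ξ|²/4) η₁ - i√(τ² - k²) η₂ and ζ₂ = -ξ/2 + √(τ² - |ξ|²/4) η₁ + i√(τ² - k²) η₂. Then ζ₁·ζ₁ = k², ζ₂·ζ₂ = k², iζ₁ + conj(iζ₂) = iξ, and lim_{τ→∞} ζ₁/τ = lim_{τ→∞} conj(ζ₂)/τ = η₁ - iη₂. -/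

import Mathlib

/-! η₁ is a unit vector orthogonal to ξ, and η₂ = η₁ × ξ/|ξ| is then a unit vector orthogonal to
both η₁ and ξ. Hence for complex c, a, b the bilinear square of cξ + aη₁ + bη₂ is
c²|ξ|² + a² + b², which for c = ±1/2, a = √(τ² - |ξ|²/4), b = ∓i√(τ² - k²) equals k².
The limits follow from √(τ² - c)/τ → 1. -/

open Matrix Complex Filter

noncomputable section

def nrm (x : Fin 3 → ℝ) : ℝ := Real.sqrt (x ⬝ᵥ x)

lemma nrm_sq (x : Fin 3 → ℝ) : nrm x ^ 2 = x ⬝ᵥ x :=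
  Real.sq_sqrt (by simpa using dotProduct_star_self_nonneg x)

lemma cross_dot_cross_self_of_orthonormal {u v : Fin 3 → ℝ} (hu : u ⬝ᵥ u = 1) (hv : v ⬝ᵥ v = 1)
    (huv : u ⬝ᵥ v = 0) : u ⨯₃ v ⬝ᵥ u ⨯₃ v = 1 := by
  rw [cross_dot_cross, hu, hv, huv, dotProduct_comm v u, huv]; ring

lemma one_div_nrm_smul_dotProduct_self {x : Fin 3 → ℝ} (hx : 0 < nrm x) :
    (1 / nrm x) • x ⬝ᵥ (1 / nrm x) • x = 1 := by
  rw [smul_dotProduct, dotProduct_smul, ← nrm_sq, smul_eq_mul, smul_eq_mul]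
  field_simp

section Frame

variable {ξ η₁ η₂ : Fin 3 → ℝ}

lemma dotProduct_self_horizontal (hξ' : 0 < nrm ![ξ 0, ξ 1, 0])
    (hη₁ : η₁ = (1 / nrm ![ξ 0, ξ 1, 0]) • ![ξ 1, -ξ 0, 0]) : η₁ ⬝ᵥ η₁ = 1 := by
  have hw : ![ξ 1, -ξ 0, 0] ⬝ᵥ ![ξ 1, -ξ 0, 0] = nrm ![ξ 0, ξ 1, 0] ^ 2 := by
    rw [nrm_sq]
    simp only [dotProduct, Fin.sum_univ_three, cons_val_zero, cons_val_one, cons_val]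
    ring
  rw [hη₁, smul_dotProduct, dotProduct_smul, hw, smul_eq_mul, smul_eq_mul]
  field_simp

lemma dotProduct_horizontal (hη₁ : η₁ = (1 / nrm ![ξ 0, ξ 1, 0]) • ![ξ 1, -ξ 0, 0]) :
    ξ ⬝ᵥ η₁ = 0 := by
  simp only [hη₁, dotProduct, Fin.sum_univ_three, Pi.smul_apply, smul_eq_mul, cons_val_zero,
    cons_val_one, cons_val]
  ring

lemma nrm_pos_of_horizontal_pos (hξ' : 0 < nrm ![ξ 0, ξ 1, 0]) : 0 < nrm ξ := by
  refine hξ'.trans_le (Real.sqrt_le_sqrt ?_)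
  simpa [dotProduct, Fin.sum_univ_three] using mul_self_nonneg (ξ 2)

lemma orthonormal_frame (hξ' : 0 < nrm ![ξ 0, ξ 1, 0])
    (hη₁ : η₁ = (1 / nrm ![ξ 0, ξ 1, 0]) • ![ξ 1, -ξ 0, 0])
    (hη₂ : η₂ = crossProduct η₁ ((1 / nrm ξ) • ξ)) :
    η₁ ⬝ᵥ η₁ = 1 ∧ η₂ ⬝ᵥ η₂ = 1 ∧ η₁ ⬝ᵥ η₂ = 0 ∧ ξ ⬝ᵥ η₁ = 0 ∧ ξ ⬝ᵥ η₂ = 0 := by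
  have h11 := dotProduct_self_horizontal hξ' hη₁
  have hξ1 := dotProduct_horizontal hη₁
  refine ⟨h11, ?_, by rw [hη₂, dot_self_cross], hξ1, ?_⟩
  · rw [hη₂]
    refine cross_dot_cross_self_of_orthonormal h11
      (one_div_nrm_smul_dotProduct_self (nrm_pos_of_horizontal_pos hξ')) ?_
    rw [dotProduct_smul, dotProduct_comm, hξ1, smul_zero]
  · rw [hη₂, LinearMap.map_smul, dotProduct_smul, dot_cross_self, smul_zero]

end Frame

lemma dotProduct_self_ofReal_combination {n : Type*} [Fintype n] {x e₁ e₂ : n → ℝ}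
    (h11 : e₁ ⬝ᵥ e₁ = 1) (h22 : e₂ ⬝ᵥ e₂ = 1) (h12 : e₁ ⬝ᵥ e₂ = 0)
    (hx1 : x ⬝ᵥ e₁ = 0) (hx2 : x ⬝ᵥ e₂ = 0) (c a b : ℂ) :
    (fun j => c * x j + a * e₁ j + b * e₂ j) ⬝ᵥ (fun j => c * x j + a * e₁ j + b * e₂ j)
      = c ^ 2 * (x ⬝ᵥ x : ℝ) + a ^ 2 + b ^ 2 := by
  have hcast : ∀ v w : n → ℝ, ((v ⬝ᵥ w : ℝ) : ℂ) = ofRealHom ∘ v ⬝ᵥ ofRealHom ∘ w :=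
    fun v w => RingHom.map_dotProduct ofRealHom v w
  have hvec : (fun j => c * x j + a * e₁ j + b * e₂ j)
      = c • (ofRealHom ∘ x) + a • (ofRealHom ∘ e₁) + b • (ofRealHom ∘ e₂) := rfl
  rw [hvec]
  simp only [add_dotProduct, dotProduct_add, smul_dotProduct, dotProduct_smul, smul_eq_mul,
    ← hcast, dotProduct_comm e₂ e₁, dotProduct_comm e₁ x, dotProduct_comm e₂ x,
    h11, h22, h12, hx1, hx2]
  push_cast
  ring

lemma tendsto_sqrt_sq_sub_div_self (c : ℝ) :
    Tendsto (fun τ : ℝ => √(τ ^ 2 - c) / τ) atTop (nhds 1) := by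
  have h : ∀ᶠ τ : ℝ in atTop, √(τ ^ 2 - c) / τ = √(1 - c / τ ^ 2) := by
    filter_upwards [eventually_gt_atTop (0:ℝ)] with τ hτ
    rw [show τ ^ 2 - c = (1 - c / τ ^ 2) * τ ^ 2 by field_simp, Real.sqrt_mul' _ (sq_nonneg τ),
      Real.sqrt_sq hτ.le, mul_div_cancel_right₀ _ hτ.ne']
  rw [tendsto_congr' h]
  have hlim : Tendsto (fun τ : ℝ => 1 - c / τ ^ 2) atTop (nhds 1) := by
    simpa using tendsto_const_nhds.sub
      (tendsto_const_nhds.div_atTop (tendsto_pow_atTop (α := ℝ) two_ne_zero))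
  simpa using hlim.sqrt

lemma tendsto_ofReal_combination_div {n : Type*} (x e₁ e₂ : n → ℝ) (c σ : ℂ) (p q : ℝ) :
    Tendsto (fun τ : ℝ => fun j =>
        (c * x j + (√(τ ^ 2 - p) : ℝ) * e₁ j - σ * (√(τ ^ 2 - q) : ℝ) * e₂ j) / (τ : ℂ))
      atTop (nhds fun j => (e₁ j : ℂ) - σ * e₂ j) := by
  rw [tendsto_pi_nhds]
  intro j
  have hinv : Tendsto (fun τ : ℝ => ((τ : ℂ))⁻¹) atTop (nhds 0) := by
    simpa using tendsto_inv_atTop_zero.ofReal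
  have hp := (tendsto_sqrt_sq_sub_div_self p).ofReal
  have hq := (tendsto_sqrt_sq_sub_div_self q).ofReal
  push_cast at hp hq
  have := ((hinv.const_mul (c * x j)).add (hp.mul_const (e₁ j : ℂ))).sub
    ((hq.const_mul σ).mul_const (e₂ j : ℂ))
  simp only [mul_zero, zero_add, one_mul, mul_one] at this
  refine this.congr fun τ => ?_
  ring

theorem stmt_3 (ξ η₁ η₂ : Fin 3 → ℝ) (k : ℝ)
    (hξ' : nrm ![ξ 0, ξ 1, 0] > 0)
    (hη₁ : η₁ = (1 / nrm ![ξ 0, ξ 1, 0]) • ![ξ 1, -ξ 0, 0])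
    (hη₂ : η₂ = crossProduct η₁ ((1 / nrm ξ) • ξ))
    (hk : 0 < k)
    (ζ₁ ζ₂ : ℝ → Fin 3 → ℂ)
    (hζ₁ : ∀ τ, ζ₁ τ = fun j => (ξ j : ℂ) / 2
        + (Real.sqrt (τ^2 - (nrm ξ)^2 / 4) : ℝ) * (η₁ j : ℂ)
        - Complex.I * (Real.sqrt (τ^2 - k^2) : ℝ) * (η₂ j : ℂ))
    (hζ₂ : ∀ τ, ζ₂ τ = fun j => -(ξ j : ℂ) / 2
        + (Real.sqrt (τ^2 - (nrm ξ)^2 / 4) : ℝ) * (η₁ j : ℂ)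
        + Complex.I * (Real.sqrt (τ^2 - k^2) : ℝ) * (η₂ j : ℂ)) :
    (∀ τ : ℝ, τ > max k (nrm ξ / 2) →
      ζ₁ τ ⬝ᵥ ζ₁ τ = (k : ℂ)^2 ∧ ζ₂ τ ⬝ᵥ ζ₂ τ = (k : ℂ)^2 ∧
      (fun j => Complex.I * ζ₁ τ j + starRingEnd ℂ (Complex.I * ζ₂ τ j))
        = fun j => Complex.I * (ξ j : ℂ)) ∧
    Tendsto (fun τ : ℝ => fun j => ζ₁ τ j / (τ : ℂ)) atTop
      (nhds (fun j => (η₁ j : ℂ) - Complex.I * (η₂ j : ℂ))) ∧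
    Tendsto (fun τ : ℝ => fun j => starRingEnd ℂ (ζ₂ τ j) / (τ : ℂ)) atTop
      (nhds (fun j => (η₁ j : ℂ) - Complex.I * (η₂ j : ℂ))) := by
  obtain ⟨h11, h22, h12, hξ1, hξ2⟩ := orthonormal_frame hξ' hη₁ hη₂
  have hdot := dotProduct_self_ofReal_combination h11 h22 h12 hξ1 hξ2
  have hlim (c : ℂ) := tendsto_ofReal_combination_div ξ η₁ η₂ c I (nrm ξ ^ 2 / 4) (k ^ 2)
  have hconj (τ : ℝ) (j : Fin 3) : starRingEnd ℂ (ζ₂ τ j) = -(ξ j : ℂ) / 2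
      + (√(τ ^ 2 - nrm ξ ^ 2 / 4) : ℝ) * (η₁ j : ℂ) - I * (√(τ ^ 2 - k ^ 2) : ℝ) * (η₂ j : ℂ) := by
    simp only [hζ₂, map_add, map_mul, map_neg, map_div₀, conj_I, conj_ofReal, map_ofNat]
    ring
  refine ⟨fun τ hτ => ?_, (hlim (1 / 2)).congr fun τ => ?_, (hlim (-1 / 2)).congr fun τ => ?_⟩
  · rw [gt_iff_lt, max_lt_iff] at hτ
    have hs : 0 ≤ nrm ξ := Real.sqrt_nonneg _
    have ha : ((√(τ ^ 2 - nrm ξ ^ 2 / 4) : ℝ) : ℂ) ^ 2 = ((τ ^ 2 - nrm ξ ^ 2 / 4 : ℝ) : ℂ) := by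
      rw [← ofReal_pow, Real.sq_sqrt (by nlinarith)]
    have hb : ((√(τ ^ 2 - k ^ 2) : ℝ) : ℂ) ^ 2 = ((τ ^ 2 - k ^ 2 : ℝ) : ℂ) := by
      rw [← ofReal_pow, Real.sq_sqrt (by nlinarith)]
    refine ⟨?_, ?_, ?_⟩
    · rw [show ζ₁ τ = fun j => (1 / 2 : ℂ) * ξ j + (√(τ ^ 2 - nrm ξ ^ 2 / 4) : ℝ) * η₁ j
          + (-I * (√(τ ^ 2 - k ^ 2) : ℝ)) * η₂ j by funext j; rw [hζ₁]; ring, hdot, ← nrm_sq]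
      push_cast at ha hb ⊢
      linear_combination ha + I ^ 2 * hb + ((τ : ℂ) ^ 2 - (k : ℂ) ^ 2) * I_sq
    · rw [show ζ₂ τ = fun j => (-1 / 2 : ℂ) * ξ j + (√(τ ^ 2 - nrm ξ ^ 2 / 4) : ℝ) * η₁ j
          + (I * (√(τ ^ 2 - k ^ 2) : ℝ)) * η₂ j by funext j; rw [hζ₂]; ring, hdot, ← nrm_sq]
      push_cast at ha hb ⊢
      linear_combination ha + I ^ 2 * hb + ((τ : ℂ) ^ 2 - (k : ℂ) ^ 2) * I_sq
    · funext j
      rw [map_mul, conj_I, hconj, hζ₁]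
      ring
  · funext j; rw [hζ₁]; ring
  · funext j; rw [hconj]; ring
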